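/- Let h be the underdamped modal impulse response h(t) = (1/ω_d) e^{-γt/2} sin(ω_d t)·𝟙_{t≥0}, and define its autocorrelation C(τ) = ∫_{-∞}^{∞} h(s) h(s + τ) ds. Then for τ ≥ 0, C(τ) = (1/(2γ(ω_d² + γ²/4))) e^{-γτ/2} ( cos(ω_d τ) + (γ/(2ω_d)) sin(ω_d τ) ), i.e., the autocorrelation is, up to the constant factor 1/(2γ), itself proportional to a damped oscillation at the same frequency ω_d and decay rate γ/2. -/
import Mathlib


open Real MeasureTheory

/-- The autocorrelation `C(τ) = ∫ h(s) h(s+τ) ds` of the underdamped modal impulse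
response `h(t) = (1/ω_d) e^{-γt/2} sin(ω_d t) 𝟙_{t≥0}` equals, for `τ ≥ 0`,
`(1/(2γ(ω_d² + γ²/4))) e^{-γτ/2} (cos(ω_d τ) + (γ/(2ω_d)) sin(ω_d τ))`. -/
theorem autocorrelation_of_impulse_response (γ ωd : ℝ) (hγ : 0 < γ) (hωd : 0 < ωd)
    (h : ℝ → ℝ)
    (hh : ∀ t, h t = if 0 ≤ t then (1 / ωd) * Real.exp (-γ * t / 2) * Real.sin (ωd * t) else 0)
    (τ : ℝ) (hτ : 0 ≤ τ) :
    ∫ s : ℝ, h s * h (s + τ)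
      = (1 / (2 * γ * (ωd ^ 2 + γ ^ 2 / 4))) * Real.exp (-γ * τ / 2)
          * (Real.cos (ωd * τ) + (γ / (2 * ωd)) * Real.sin (ωd * τ)) := by
  have hγ0 : γ ≠ 0 := hγ.ne'
  have hω0 : ωd ≠ 0 := hωd.ne'
  have hD0 : γ ^ 2 + 4 * ωd ^ 2 ≠ 0 := by positivity
  set D : ℝ := γ ^ 2 + 4 * ωd ^ 2 with hD
  set K : ℝ := Real.exp (-γ * τ / 2) / ωd ^ 2 with hK
  set A : ℝ := -Real.cos (ωd * τ) / (2 * γ) with hA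
  set B : ℝ := γ / (2 * D) with hB
  set C : ℝ := -ωd / D with hC
  set F : ℝ → ℝ := fun s => K * (Real.exp (-γ * s) *
    (A + B * Real.cos (2 * ωd * s + ωd * τ) + C * Real.sin (2 * ωd * s + ωd * τ))) with hF
  -- the integrand vanishes off `Ioi 0`
  have hzero : ∀ s ∉ Set.Ioi (0 : ℝ), h s * h (s + τ) = 0 := by
    intro s hs
    simp only [Set.mem_Ioi, not_lt] at hs
    rcases lt_or_eq_of_le hs with hlt | heq
    · rw [hh s, if_neg (not_le.mpr hlt), zero_mul]
    · subst heq
      rw [hh 0]; simp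
  -- pointwise formula for the integrand on `Ioi 0`
  have hfs : ∀ s ∈ Set.Ioi (0 : ℝ), h s * h (s + τ)
      = K * Real.exp (-γ * s) *
        ((Real.cos (ωd * τ) - Real.cos (2 * ωd * s + ωd * τ)) / 2) := by
    intro s hs
    have hs0 : (0 : ℝ) ≤ s := le_of_lt hs
    have hsτ : (0 : ℝ) ≤ s + τ := by linarith
    rw [hh s, hh (s + τ), if_pos hs0, if_pos hsτ]
    have hexp : Real.exp (-γ * s / 2) * Real.exp (-γ * (s + τ) / 2)
        = Real.exp (-γ * τ / 2) * Real.exp (-γ * s) := by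
      rw [← Real.exp_add, ← Real.exp_add]; ring_nf
    have htrig : Real.cos (ωd * τ) - Real.cos (2 * ωd * s + ωd * τ)
        = 2 * (Real.sin (ωd * s) * Real.sin (ωd * (s + τ))) := by
      have e1 : Real.cos (ωd * τ) = Real.cos (ωd * (s + τ) - ωd * s) := by congr 1; ring
      have e2 : Real.cos (2 * ωd * s + ωd * τ) = Real.cos (ωd * s + ωd * (s + τ)) := by
        congr 1; ring
      rw [e1, e2, Real.cos_sub, Real.cos_add]; ring
    rw [hK, htrig]
    linear_combination (Real.sin (ωd * s) * Real.sin (ωd * (s + τ)) / ωd ^ 2) * hexp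
  -- derivative
  have hderiv : ∀ x ∈ Set.Ioi (0 : ℝ), HasDerivAt F (h x * h (x + τ)) x := by
    intro x hx
    have hu : HasDerivAt (fun s : ℝ => 2 * ωd * s + ωd * τ) (2 * ωd) x := by
      simpa using ((hasDerivAt_id x).const_mul (2 * ωd)).add_const (ωd * τ)
    have he : HasDerivAt (fun s : ℝ => Real.exp (-γ * s)) (-γ * Real.exp (-γ * x)) x := by
      simpa [mul_comm] using ((hasDerivAt_id x).const_mul (-γ)).exp
    have hG : HasDerivAt (fun s : ℝ => A + B * Real.cos (2 * ωd * s + ωd * τ)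
          + C * Real.sin (2 * ωd * s + ωd * τ))
        (B * (-Real.sin (2 * ωd * x + ωd * τ) * (2 * ωd))
          + C * (Real.cos (2 * ωd * x + ωd * τ) * (2 * ωd))) x :=
      ((hu.cos.const_mul B).const_add A).add (hu.sin.const_mul C)
    have hFx := (he.mul hG).const_mul K
    have heq : K * (-γ * Real.exp (-γ * x)
          * (A + B * Real.cos (2 * ωd * x + ωd * τ) + C * Real.sin (2 * ωd * x + ωd * τ))
        + Real.exp (-γ * x) * (B * (-Real.sin (2 * ωd * x + ωd * τ) * (2 * ωd))
          + C * (Real.cos (2 * ωd * x + ωd * τ) * (2 * ωd))))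
        = h x * h (x + τ) := by
      rw [hfs x hx, hA, hB, hC, hD]
      field_simp
      ring
    rw [← heq]
    exact hFx
  -- continuity at 0 from the right
  have hcont : ContinuousWithinAt F (Set.Ici 0) 0 := by
    have : Continuous F := by rw [hF]; fun_prop
    exact this.continuousWithinAt
  -- integrability of the integrand on `Ioi 0`
  have hm : Measurable h := by
    have : h = fun t => if 0 ≤ t then (1 / ωd) * Real.exp (-γ * t / 2) * Real.sin (ωd * t)
        else 0 := funext hh
    rw [this]
    exact Measurable.ite measurableSet_Ici (by fun_prop) measurable_const
  have hint : IntegrableOn (fun s => h s * h (s + τ)) (Set.Ioi 0) := by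
    apply Integrable.mono' ((exp_neg_integrableOn_Ioi 0 hγ).const_mul |K|)
    · exact ((hm.mul (hm.comp (measurable_id.add_const τ))).aestronglyMeasurable).restrict
    · rw [ae_restrict_iff' measurableSet_Ioi]
      filter_upwards with s hs
      rw [hfs s hs]
      have e1 : |Real.cos (ωd * τ)| ≤ 1 := Real.abs_cos_le_one _
      have e2 : |Real.cos (2 * ωd * s + ωd * τ)| ≤ 1 := Real.abs_cos_le_one _
      have hep : (0:ℝ) < Real.exp (-γ * s) := Real.exp_pos _
      rw [Real.norm_eq_abs, abs_mul, abs_mul, abs_of_pos hep]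
      have : |(Real.cos (ωd * τ) - Real.cos (2 * ωd * s + ωd * τ)) / 2| ≤ 1 := by
        rw [abs_div]
        have := abs_sub (Real.cos (ωd * τ)) (Real.cos (2 * ωd * s + ωd * τ))
        rw [abs_of_pos (by norm_num : (0:ℝ) < 2)]
        linarith
      calc |K| * Real.exp (-γ * s) * |(Real.cos (ωd * τ) - Real.cos (2 * ωd * s + ωd * τ)) / 2|
          ≤ |K| * Real.exp (-γ * s) * 1 :=
            mul_le_mul_of_nonneg_left this (by positivity)
        _ = |K| * Real.exp (-γ * s) := by ring
  -- limit of F at infinity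
  have htend : Filter.Tendsto F Filter.atTop (nhds 0) := by
    have hexp0 : Filter.Tendsto (fun s : ℝ => Real.exp (-γ * s)) Filter.atTop (nhds 0) := by
      have h1 : Filter.Tendsto (fun s : ℝ => γ * s) Filter.atTop Filter.atTop :=
        Filter.Tendsto.const_mul_atTop hγ Filter.tendsto_id
      have h2 := Real.tendsto_exp_neg_atTop_nhds_zero.comp h1
      exact h2.congr (fun x => by simp [Function.comp, neg_mul])
    have hg : Filter.Tendsto (fun s : ℝ => |K| * (|A| + |B| + |C|) * Real.exp (-γ * s))
        Filter.atTop (nhds 0) := by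
      simpa using hexp0.const_mul (|K| * (|A| + |B| + |C|))
    apply squeeze_zero_norm _ hg
    intro s
    rw [hF]
    have hep : (0:ℝ) < Real.exp (-γ * s) := Real.exp_pos _
    rw [Real.norm_eq_abs, abs_mul, abs_mul, abs_of_pos hep]
    have e1 : |Real.cos (2 * ωd * s + ωd * τ)| ≤ 1 := Real.abs_cos_le_one _
    have e2 : |Real.sin (2 * ωd * s + ωd * τ)| ≤ 1 := Real.abs_sin_le_one _
    have hG : |A + B * Real.cos (2 * ωd * s + ωd * τ) + C * Real.sin (2 * ωd * s + ωd * τ)|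
        ≤ |A| + |B| + |C| := by
      calc |A + B * Real.cos (2 * ωd * s + ωd * τ) + C * Real.sin (2 * ωd * s + ωd * τ)|
          ≤ |A + B * Real.cos (2 * ωd * s + ωd * τ)| + |C * Real.sin (2 * ωd * s + ωd * τ)| :=
            abs_add_le _ _
        _ ≤ |A| + |B * Real.cos (2 * ωd * s + ωd * τ)| + |C * Real.sin (2 * ωd * s + ωd * τ)| :=
            by linarith [abs_add_le A (B * Real.cos (2 * ωd * s + ωd * τ))]
        _ ≤ |A| + |B| + |C| := by
            rw [abs_mul, abs_mul]
            nlinarith [abs_nonneg B, abs_nonneg C]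
    nlinarith [mul_le_mul_of_nonneg_left hG (mul_nonneg (abs_nonneg K) hep.le)]
  -- combine
  have hInt : ∫ s in Set.Ioi (0:ℝ), h s * h (s + τ) = 0 - F 0 :=
    integral_Ioi_of_hasDerivAt_of_tendsto hcont hderiv hint htend
  rw [← setIntegral_eq_integral_of_forall_compl_eq_zero hzero, hInt]
  rw [hF]
  simp only [mul_zero, zero_add, Real.exp_zero, neg_mul, neg_zero]
  rw [hA, hB, hC, hK, hD]
  have : Real.exp (-γ * 0) = 1 := by norm_num
  field_simp
  ring
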